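/- Let G be r₁-regular on n vertices with Laplacian eigenprojectors F_{θ_r}, and suppose e_a − e_b and e_c − e_d are Laplacian strongly cospectral in G with support S = {θ_0,…,θ_k}, θ_0 ∈ Λ⁺. Let H be r₂-regular on m vertices admitting perfect state transfer between vertices w and z at minimum time τ with phase λ where λ is a primitive p-th root of unity, p even, λ^{p/2} = −1, and U_{A_H} satisfies the periodicity/PST behavior at integer multiples of τ as in Lemma on powers. If for each θ_r ∈ S, (θ_r − r₁)t is an odd multiple of τ, and θ_r ∈ Λ⁺ iff (θ_0 t − θ_r t)/τ ≡ 0 (mod p) while θ_r ∈ Λ⁻ iff (θ_0 t − θ_r t)/τ ≡ p/2 (mod p), then U_{L_{G×H}}(t) ((e_a − e_b) ⊗ e_w) = e^{−i t r₁ r₂} λ^{k₀} ((e_c − e_d) ⊗ e_z) for the odd integer k₀ with (θ_0 − r₁)t = k₀τ; i.e. G × H has Laplacian perfect pair state transfer between (e_a − e_b) ⊗ e_w and (e_c − e_d) ⊗ e_z at time t. -/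

import Mathlib

open Matrix Complex Kronecker

/-- transition matrix `U_M(t) = exp(-itM)` -/
noncomputable def U {V : Type*} [Fintype V] [DecidableEq V] (M : Matrix V V ℂ) (t : ℝ) :
    Matrix V V ℂ :=
  NormedSpace.exp ((-(Complex.I * (t : ℂ))) • M)

/-- standard basis vector -/
noncomputable def e {V : Type*} [DecidableEq V] (v : V) : V → ℂ := Pi.single v 1

/-- Kronecker product of vectors -/
def vecKron {α β : Type*} (u : α → ℂ) (v : β → ℂ) : α × β → ℂ := fun p => u p.1 * v p.2

/-!
Decompose `e_a - e_b = ∑ᵢ Fᵢ (e_a - e_b)` into eigencomponents of `L_G`. If `A_G u = (r₁ - θ) u`,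
then `r₁r₂ I - A_G ⊗ A_H` acts on `u ⊗ x` as `r₁r₂ I - (r₁ - θ) A_H` acts on `x`, so
`U(t) (u ⊗ e_w) = e^{-itr₁r₂} u ⊗ U_{A_H}((θ - r₁)t) e_w = e^{-itr₁r₂} λ^k u ⊗ e_z`
where `(θ - r₁)t = kτ` with `k` odd. Since `U_{A_H}(kτ) e_w = λ^k e_x` for some vertex `x`,
the phase `λ^k` depends only on `kτ`; the congruence conditions on `(θ₀ - θ)t / τ` then give
`λ^k Fᵢ (e_a - e_b) = λ^{k₀} Fᵢ (e_c - e_d)` on every eigenspace, and summing up gives the claim.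
-/

section VecKron

variable {α β : Type*}

lemma vecKron_smul_left (c : ℂ) (u : α → ℂ) (v : β → ℂ) :
    vecKron (c • u) v = c • vecKron u v := by
  funext x; simp only [vecKron, Pi.smul_apply, smul_eq_mul, mul_assoc]

lemma vecKron_smul_right (c : ℂ) (u : α → ℂ) (v : β → ℂ) :
    vecKron u (c • v) = c • vecKron u v := by
  funext x; simp only [vecKron, Pi.smul_apply, smul_eq_mul, mul_left_comm]

lemma vecKron_add_right (u : α → ℂ) (v v' : β → ℂ) :
    vecKron u (v + v') = vecKron u v + vecKron u v' := by
  funext x; simp only [vecKron, Pi.add_apply, mul_add]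

lemma vecKron_sum_left {ι : Type*} (s : Finset ι) (f : ι → α → ℂ) (v : β → ℂ) :
    vecKron (∑ i ∈ s, f i) v = ∑ i ∈ s, vecKron (f i) v := by
  funext x; simp only [vecKron, Finset.sum_apply, Finset.sum_mul]

lemma vecKron_zero_left (v : β → ℂ) : vecKron (0 : α → ℂ) v = 0 := by
  funext x; simp [vecKron]

def vecKronₗ (u : α → ℂ) : (β → ℂ) →ₗ[ℂ] (α × β → ℂ) where
  toFun := vecKron u
  map_add' := vecKron_add_right u
  map_smul' c := vecKron_smul_right c u

lemma vecKronₗ_apply (u : α → ℂ) (v : β → ℂ) : vecKronₗ u v = vecKron u v := rfl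

lemma kronecker_mulVec_vecKron [Fintype α] [Fintype β] (A : Matrix α α ℂ) (B : Matrix β β ℂ)
    (u : α → ℂ) (v : β → ℂ) :
    (A ⊗ₖ B) *ᵥ vecKron u v = vecKron (A *ᵥ u) (B *ᵥ v) := by
  funext x
  simp only [mulVec, dotProduct, vecKron, kroneckerMap_apply, Fintype.sum_prod_type,
    Finset.sum_mul_sum]
  exact Finset.sum_congr rfl fun j _ => Finset.sum_congr rfl fun l _ => by ring

end VecKron

section Exponential

variable {V W : Type*} [Fintype V] [DecidableEq V] [Fintype W] [DecidableEq W]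

lemma exp_mulVec_of_intertwines {M : Matrix V V ℂ} {N : Matrix W W ℂ}
    (f : (W → ℂ) →ₗ[ℂ] (V → ℂ)) (h : ∀ v, M *ᵥ f v = f (N *ᵥ v)) (v : W → ℂ) :
    NormedSpace.exp M *ᵥ f v = f (NormedSpace.exp N *ᵥ v) := by
  have hpow : ∀ k : ℕ, M ^ k *ᵥ f v = f (N ^ k *ᵥ v) := by
    intro k
    induction k with
    | zero => simp
    | succ k ih => rw [pow_succ', ← mulVec_mulVec, ih, h, mulVec_mulVec, ← pow_succ']
  open scoped Norms.Operator in
  have hM := (NormedSpace.exp_series_hasSum_exp' (𝕂 := ℂ) M).map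
    (mulVec.addMonoidHomLeft (f v)) (continuous_id.matrix_mulVec continuous_const)
  open scoped Norms.Operator in
  have hN := ((NormedSpace.exp_series_hasSum_exp' (𝕂 := ℂ) N).map
    (mulVec.addMonoidHomLeft v) (continuous_id.matrix_mulVec continuous_const)).map
    f f.continuous_of_finiteDimensional
  refine hM.unique ?_
  convert hN using 1
  funext k
  change ((k.factorial⁻¹ : ℂ) • M ^ k) *ᵥ f v = f (((k.factorial⁻¹ : ℂ) • N ^ k) *ᵥ v)
  rw [smul_mulVec, smul_mulVec, hpow, map_smul]
  rfl

lemma exp_smul_one (c : ℂ) :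
    NormedSpace.exp (c • (1 : Matrix W W ℂ)) = Complex.exp c • 1 := by
  rw [smul_one_eq_diagonal, smul_one_eq_diagonal, exp_diagonal, Pi.exp_def,
    Complex.exp_eq_exp_ℂ]

end Exponential

lemma U_smul_one_sub_kronecker_mulVec_vecKron {α β : Type*} [Fintype α] [DecidableEq α]
    [Fintype β] [DecidableEq β] (c : ℂ) (A : Matrix α α ℂ) (B : Matrix β β ℂ) {u : α → ℂ}
    {μ : ℝ} (hu : A *ᵥ u = (μ : ℂ) • u) (t : ℝ) (v : β → ℂ) :
    U (c • 1 - A ⊗ₖ B) t *ᵥ vecKron u v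
      = Complex.exp (-(I * t * c)) • vecKron u (U B (-(μ * t)) *ᵥ v) := by
  set N : Matrix β β ℂ := (-(I * t)) • (c • 1 - (μ : ℂ) • B)
  have hintertwine : ∀ x, ((-(I * t)) • (c • 1 - A ⊗ₖ B)) *ᵥ vecKronₗ u x
      = vecKronₗ u (N *ᵥ x) := by
    intro x
    simp only [N, smul_mulVec, sub_mulVec, one_mulVec, map_smul, map_sub]
    rw [vecKronₗ_apply, vecKronₗ_apply, kronecker_mulVec_vecKron, hu, vecKron_smul_left]
  have hN : N = (-(I * t * c)) • 1 + (-(I * ((-(μ * t) : ℝ) : ℂ))) • B := by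
    simp only [N]; push_cast; module
  have hcomm : Commute ((-(I * t * c)) • (1 : Matrix β β ℂ)) ((-(I * ((-(μ * t) : ℝ) : ℂ))) • B) :=
    ((Commute.one_left B).smul_left _).smul_right _
  change _ *ᵥ vecKronₗ u v = _
  rw [U, exp_mulVec_of_intertwines (vecKronₗ u) hintertwine, hN,
    Matrix.exp_add_of_commute _ _ hcomm, exp_smul_one, smul_one_mul, smul_mulVec, map_smul,
    vecKronₗ_apply, U]

lemma sum_smul_mul_of_orthogonal {ι V R : Type*} [Fintype ι] [DecidableEq ι] [Fintype V]
    [Semiring R] (θ : ι → R) {F : ι → Matrix V V R}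
    (horth : ∀ i j, F i * F j = if i = j then F i else 0) (i : ι) :
    (∑ j, θ j • F j) * F i = θ i • F i := by
  simp [Finset.sum_mul, smul_mul_assoc, horth]

lemma SimpleGraph.IsRegularOfDegree.adjMatrix_eq {V R : Type*} [Fintype V] [DecidableEq V]
    [Ring R] {G : SimpleGraph V} [DecidableRel G.Adj] {d : ℕ} (hG : G.IsRegularOfDegree d) :
    G.adjMatrix R = (d : R) • 1 - G.lapMatrix R := by
  have hdeg : G.degMatrix R = (d : R) • 1 := by
    rw [smul_one_eq_diagonal, SimpleGraph.degMatrix]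
    congr 1
    funext v
    rw [hG v]
  rw [SimpleGraph.lapMatrix, hdeg, sub_sub_cancel]

lemma SimpleGraph.IsRegularOfDegree.adjMatrix_mulVec_of_lapMatrix_eq_sum {V ι : Type*}
    [Fintype V] [DecidableEq V] [Fintype ι] [DecidableEq ι] {G : SimpleGraph V}
    [DecidableRel G.Adj] {d : ℕ} (hG : G.IsRegularOfDegree d) {θ : ι → ℝ}
    {F : ι → Matrix V V ℂ} (horth : ∀ i j, F i * F j = if i = j then F i else 0)
    (hspec : G.lapMatrix ℂ = ∑ i, ((θ i : ℝ) : ℂ) • F i) (i : ι) (x : V → ℂ) :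
    G.adjMatrix ℂ *ᵥ (F i *ᵥ x) = (((d : ℝ) - θ i : ℝ) : ℂ) • (F i *ᵥ x) := by
  rw [mulVec_mulVec, hG.adjMatrix_eq, sub_mul, hspec, sum_smul_mul_of_orthogonal _ horth,
    smul_mul_assoc, one_mul, ← sub_smul, smul_mulVec]
  push_cast
  rfl

lemma ne_zero_of_pow_eq_neg_one {lam : ℂ} {q : ℕ} (hhalf : lam ^ q = -1) : lam ≠ 0 := by
  rintro rfl
  rw [zero_pow_eq] at hhalf
  split_ifs at hhalf <;> norm_num at hhalf

lemma zpow_mul_natCast_eq_one {lam : ℂ} {p q : ℕ} (hq : p = 2 * q) (hhalf : lam ^ q = -1)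
    (j : ℤ) : lam ^ (j * p) = 1 := by
  rw [mul_comm, _root_.zpow_mul, zpow_natCast, hq, pow_mul', hhalf]
  norm_num

section PerfectStateTransfer

variable {β : Type*} [Fintype β] [DecidableEq β] {B : Matrix β β ℂ} {τ : ℝ} {lam : ℂ} {w z : β}

lemma exists_U_mulVec_eq_zpow_smul
    (heven : ∀ k : ℤ, U B ((2 * (k : ℝ)) * τ) *ᵥ e w = lam ^ (2 * k) • (e w : β → ℂ))
    (hodd : ∀ k : ℤ, U B ((2 * (k : ℝ) + 1) * τ) *ᵥ e w = lam ^ (2 * k + 1) • (e z : β → ℂ))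
    (k : ℤ) : ∃ x, U B (k * τ) *ᵥ e w = lam ^ k • e x := by
  obtain ⟨j, rfl | rfl⟩ := Int.even_or_odd' k
  · exact ⟨w, by simpa using heven j⟩
  · exact ⟨z, by simpa using hodd j⟩

lemma zpow_eq_zpow_of_mul_eq_mul (hlam : lam ≠ 0)
    (hU : ∀ k : ℤ, ∃ x, U B (k * τ) *ᵥ e w = lam ^ k • e x)
    {k k' : ℤ} (h : (k : ℝ) * τ = k' * τ) : lam ^ k = lam ^ k' := by
  obtain ⟨x, hx⟩ := hU k
  obtain ⟨x', hx'⟩ := hU k'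
  have hval := congrFun (hx.symm.trans (h ▸ hx')) x
  by_cases hxx : x' = x
  · simpa [e, hxx] using hval
  · simp only [e, Pi.smul_apply, Pi.single_eq_same, Pi.single_eq_of_ne' hxx, smul_eq_mul,
      mul_one, mul_zero] at hval
    exact absurd hval (zpow_ne_zero k hlam)

lemma zpow_smul_eq_zpow_smul_of_sign {γ : Type*} {p q : ℕ} (hq : p = 2 * q)
    (hhalf : lam ^ q = -1)
    (hU : ∀ k : ℤ, ∃ x, U B (k * τ) *ᵥ e w = lam ^ k • e x)
    {x y : γ → ℂ} {k k₀ : ℤ} {s : ℝ} (hs : (k₀ : ℝ) * τ = k * τ + s)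
    (hsign : x = y ∨ x = -y) (hplus : x = y → ∃ l : ℤ, s = ((l * p : ℤ) : ℝ) * τ)
    (hminus : x = -y → ∃ l : ℤ, s = ((l * p + q : ℤ) : ℝ) * τ) :
    lam ^ k • x = lam ^ k₀ • y := by
  have hlam : lam ≠ 0 := ne_zero_of_pow_eq_neg_one hhalf
  rcases hsign with h | h
  · obtain ⟨l, hl⟩ := hplus h
    have hk₀ : lam ^ k₀ = lam ^ k := by
      rw [zpow_eq_zpow_of_mul_eq_mul hlam hU (k' := k + l * p)
          (by push_cast at hl ⊢; linear_combination hs + hl),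
        zpow_add₀ hlam, zpow_mul_natCast_eq_one hq hhalf, mul_one]
    rw [h, hk₀]
  · obtain ⟨l, hl⟩ := hminus h
    have hk₀ : lam ^ k₀ = -lam ^ k := by
      rw [zpow_eq_zpow_of_mul_eq_mul hlam hU (k' := k + l * p + q)
          (by push_cast at hl ⊢; linear_combination hs + hl),
        zpow_add₀ hlam, zpow_add₀ hlam, zpow_mul_natCast_eq_one hq hhalf, zpow_natCast, hhalf]
      ring
    rw [h, hk₀, smul_neg, neg_smul]

end PerfectStateTransfer

lemma mulVec_vecKron_eq_of_sum_eq_one {α β γ ι : Type*} [Fintype α] [DecidableEq α]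
    [Fintype β] [Fintype ι] {F : ι → Matrix α α ℂ} (hsum : ∑ i, F i = 1)
    (M : Matrix (α × γ) (α × β) ℂ) (s : ℂ)
    {x y : α → ℂ} {v : β → ℂ} {v' : γ → ℂ}
    (h : ∀ i, M *ᵥ vecKron (F i *ᵥ x) v = s • vecKron (F i *ᵥ y) v') :
    M *ᵥ vecKron x v = s • vecKron y v' := by
  have hdecomp : ∀ x : α → ℂ, x = ∑ i, F i *ᵥ x := fun x => by
    rw [← sum_mulVec, hsum, one_mulVec]
  rw [hdecomp x, hdecomp y, vecKron_sum_left, vecKron_sum_left, mulVec_sum, Finset.smul_sum]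
  exact Finset.sum_congr rfl fun i _ => h i

theorem stmt7_general {n m r₁ r₂ : ℕ} (G : SimpleGraph (Fin n)) [DecidableRel G.Adj]
    (H : SimpleGraph (Fin m)) [DecidableRel H.Adj]
    (hG : G.IsRegularOfDegree r₁)
    {ι : Type*} [Fintype ι] [DecidableEq ι]
    (θ : ι → ℝ) (F : ι → Matrix (Fin n) (Fin n) ℂ)
    (hsum : ∑ i, F i = 1)
    (horth : ∀ i j, F i * F j = if i = j then F i else 0)
    (hspec : G.lapMatrix ℂ = ∑ i, ((θ i : ℝ) : ℂ) • F i)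
    (a b c d : Fin n) (w z : Fin m)
    -- Laplacian strong cospectrality of the pair states e_a - e_b and e_c - e_d in G
    (hsc : ∀ i, F i *ᵥ (e a - e b) = F i *ᵥ (e c - e d) ∨
                F i *ᵥ (e a - e b) = -(F i *ᵥ (e c - e d)))
    -- H admits PST between w and z at minimum time τ with phase lam,
    -- a primitive p-th root of unity with p = 2q even and lam ^ (p/2) = -1
    (τ : ℝ) (lam : ℂ) (p q : ℕ)
    (hq : p = 2 * q) (hhalf : lam ^ q = -1)
    (hPSTeven : ∀ k : ℤ, (U (H.adjMatrix ℂ) ((2 * (k : ℝ)) * τ)) *ᵥ e w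
        = lam ^ (2 * k) • (e w : Fin m → ℂ))
    (hPSTodd : ∀ k : ℤ, (U (H.adjMatrix ℂ) ((2 * (k : ℝ) + 1) * τ)) *ᵥ e w
        = lam ^ (2 * k + 1) • (e z : Fin m → ℂ))
    (t : ℝ)
    -- θ₀ = θ i₀ belongs to Λ⁺ and to the support, with (θ₀ - r₁)t = k₀ τ, k₀ odd
    (i₀ : ι)
    (k₀ : ℤ) (ht₀ : (θ i₀ - (r₁ : ℝ)) * t = (k₀ : ℝ) * τ)
    -- (a) for each θ_r in the support, (θ_r - r₁)t is an odd multiple of τ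
    (hA : ∀ i, F i *ᵥ (e a - e b) ≠ 0 →
      ∃ k : ℤ, Odd k ∧ (θ i - (r₁ : ℝ)) * t = (k : ℝ) * τ)
    -- (b)(i) θ_r ∈ Λ⁺ iff (θ₀ t - θ_r t)/τ ≡ 0 (mod p)
    (hBp : ∀ i, F i *ᵥ (e a - e b) ≠ 0 →
      (F i *ᵥ (e a - e b) = F i *ᵥ (e c - e d) ↔
        ∃ k : ℤ, θ i₀ * t - θ i * t = ((k * p : ℤ) : ℝ) * τ))
    -- (b)(ii) θ_r ∈ Λ⁻ iff (θ₀ t - θ_r t)/τ ≡ p/2 (mod p)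
    (hBm : ∀ i, F i *ᵥ (e a - e b) ≠ 0 →
      (F i *ᵥ (e a - e b) = -(F i *ᵥ (e c - e d)) ↔
        ∃ k : ℤ, θ i₀ * t - θ i * t = ((k * p + q : ℤ) : ℝ) * τ)) :
    (U (((r₁ * r₂ : ℕ) : ℂ) • (1 : Matrix (Fin n × Fin m) (Fin n × Fin m) ℂ)
          - (G.adjMatrix ℂ) ⊗ₖ (H.adjMatrix ℂ)) t) *ᵥ vecKron (e a - e b) (e w)
      = (Complex.exp (-(Complex.I * (t : ℂ) * ((r₁ * r₂ : ℕ) : ℂ))) * lam ^ k₀) •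
          vecKron (e c - e d) (e z) := by
  refine mulVec_vecKron_eq_of_sum_eq_one hsum _ _ fun i => ?_
  by_cases hi : F i *ᵥ (e a - e b) = 0
  · have hi' : F i *ᵥ (e c - e d) = 0 := by
      rcases hsc i with h | h
      · rw [← h, hi]
      · rw [← neg_eq_zero, ← h, hi]
    rw [hi, hi', vecKron_zero_left, vecKron_zero_left, mulVec_zero, smul_zero]
  obtain ⟨_, ⟨j, rfl⟩, hki⟩ := hA i hi
  have hcoeff := zpow_smul_eq_zpow_smul_of_sign (k := 2 * j + 1) (k₀ := k₀) hq hhalf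
    (exists_U_mulVec_eq_zpow_smul hPSTeven hPSTodd)
    (by push_cast at hki ⊢; linear_combination hki - ht₀) (hsc i) (hBp i hi).1 (hBm i hi).1
  have htime : -(((r₁ : ℝ) - θ i) * t) = (2 * (j : ℝ) + 1) * τ := by
    push_cast at hki; linarith
  rw [U_smul_one_sub_kronecker_mulVec_vecKron _ _ _
      (hG.adjMatrix_mulVec_of_lapMatrix_eq_sum horth hspec i _), htime, hPSTodd,
    vecKron_smul_right, ← vecKron_smul_left, hcoeff, vecKron_smul_left, smul_smul]

theorem stmt7 {n m r₁ r₂ : ℕ} (G : SimpleGraph (Fin n)) [DecidableRel G.Adj]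
    (H : SimpleGraph (Fin m)) [DecidableRel H.Adj]
    (hG : G.IsRegularOfDegree r₁) (hH : H.IsRegularOfDegree r₂)
    {ι : Type*} [Fintype ι] [DecidableEq ι]
    (θ : ι → ℝ) (F : ι → Matrix (Fin n) (Fin n) ℂ)
    (hsum : ∑ i, F i = 1)
    (horth : ∀ i j, F i * F j = if i = j then F i else 0)
    (hspec : G.lapMatrix ℂ = ∑ i, ((θ i : ℝ) : ℂ) • F i)
    (a b c d : Fin n) (w z : Fin m) (hab : a ≠ b) (hcd : c ≠ d)
    -- Laplacian strong cospectrality of the pair states e_a - e_b and e_c - e_d in G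
    (hsc : ∀ i, F i *ᵥ (e a - e b) = F i *ᵥ (e c - e d) ∨
                F i *ᵥ (e a - e b) = -(F i *ᵥ (e c - e d)))
    -- H admits PST between w and z at minimum time τ with phase lam,
    -- a primitive p-th root of unity with p = 2q even and lam ^ (p/2) = -1
    (τ : ℝ) (lam : ℂ) (p q : ℕ) (hprim : IsPrimitiveRoot lam p)
    (hq : p = 2 * q) (hhalf : lam ^ q = -1)
    (hPSTeven : ∀ k : ℤ, (U (H.adjMatrix ℂ) ((2 * (k : ℝ)) * τ)) *ᵥ e w
        = lam ^ (2 * k) • (e w : Fin m → ℂ))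
    (hPSTodd : ∀ k : ℤ, (U (H.adjMatrix ℂ) ((2 * (k : ℝ) + 1) * τ)) *ᵥ e w
        = lam ^ (2 * k + 1) • (e z : Fin m → ℂ))
    (t : ℝ)
    -- θ₀ = θ i₀ belongs to Λ⁺ and to the support, with (θ₀ - r₁)t = k₀ τ, k₀ odd
    (i₀ : ι) (hi₀p : F i₀ *ᵥ (e a - e b) = F i₀ *ᵥ (e c - e d))
    (hi₀s : F i₀ *ᵥ (e a - e b) ≠ 0)
    (k₀ : ℤ) (hk₀ : Odd k₀) (ht₀ : (θ i₀ - (r₁ : ℝ)) * t = (k₀ : ℝ) * τ)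
    -- (a) for each θ_r in the support, (θ_r - r₁)t is an odd multiple of τ
    (hA : ∀ i, F i *ᵥ (e a - e b) ≠ 0 →
      ∃ k : ℤ, Odd k ∧ (θ i - (r₁ : ℝ)) * t = (k : ℝ) * τ)
    -- (b)(i) θ_r ∈ Λ⁺ iff (θ₀ t - θ_r t)/τ ≡ 0 (mod p)
    (hBp : ∀ i, F i *ᵥ (e a - e b) ≠ 0 →
      (F i *ᵥ (e a - e b) = F i *ᵥ (e c - e d) ↔
        ∃ k : ℤ, θ i₀ * t - θ i * t = ((k * p : ℤ) : ℝ) * τ))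
    -- (b)(ii) θ_r ∈ Λ⁻ iff (θ₀ t - θ_r t)/τ ≡ p/2 (mod p)
    (hBm : ∀ i, F i *ᵥ (e a - e b) ≠ 0 →
      (F i *ᵥ (e a - e b) = -(F i *ᵥ (e c - e d)) ↔
        ∃ k : ℤ, θ i₀ * t - θ i * t = ((k * p + q : ℤ) : ℝ) * τ)) :
    (U (((r₁ * r₂ : ℕ) : ℂ) • (1 : Matrix (Fin n × Fin m) (Fin n × Fin m) ℂ)
          - (G.adjMatrix ℂ) ⊗ₖ (H.adjMatrix ℂ)) t) *ᵥ vecKron (e a - e b) (e w)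
      = (Complex.exp (-(Complex.I * (t : ℂ) * ((r₁ * r₂ : ℕ) : ℂ))) * lam ^ k₀) •
          vecKron (e c - e d) (e z) :=
  stmt7_general G H hG θ F hsum horth hspec a b c d w z hsc τ lam p q hq hhalf hPSTeven hPSTodd t i₀
    k₀ ht₀ hA hBp hBm
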